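/- arXiv:math/0609572 — 3 statements merged into one kernel-verified Lean document; each statement's English description precedes it below -/
import Mathlib

section
/- For any graph G on n vertices with Laplacian eigenvalues 0 = λ₁ ≤ ... ≤ λ_n and any partition [n] = P₁ ∪ ... ∪ P_k into nonempty sets, λ_{n-k+1} + ... + λ_n ≥ Σ_{1≤i<j≤k} e(Pᵢ,Pⱼ)(1/|Pᵢ| + 1/|Pⱼ|). -/
/-!
The normalized indicator vectors `w i = 𝟙_{P i} / √|P i|` are orthonormal, and summing the
Laplacian quadratic form `∑_{uv ∈ E} (x u - x v)²` over them gives exactly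
`∑_{i<j} e(P i, P j) (1/|P i| + 1/|P j|)`. By Ky Fan's principle, the sum of the quadratic forms
of a Hermitian matrix over `k` orthonormal vectors is at most the sum of its `k` largest
eigenvalues: in an orthonormal eigenbasis `b` it equals `∑_j λ_j t_j` with
`t_j = ∑_i |⟪b j, w i⟫|² ∈ [0, 1]` (Bessel) and `∑_j t_j = k` (Parseval), and such a weighted sum
is largest when the whole weight sits on the top `k` eigenvalues.
-/

def partSet {n k : ℕ} (P : Fin n → Fin k) (i : Fin k) : Finset (Fin n) :=
  Finset.univ.filter (fun v => P v = i)

def pairCount {n : ℕ} (G : SimpleGraph (Fin n)) [DecidableRel G.Adj]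
    (X Y : Finset (Fin n)) : ℕ :=
  ∑ u ∈ X, ∑ v ∈ Y, if G.Adj u v then 1 else 0

open Finset Matrix RCLike
open scoped InnerProductSpace

theorem Finset.sum_mul_le_sum_of_threshold {ι : Type*} [Fintype ι] {f t : ι → ℝ} {T : Finset ι}
    (θ : ℝ) (hT : ∀ j ∈ T, θ ≤ f j) (hTc : ∀ j ∉ T, f j ≤ θ) (ht₀ : ∀ j, 0 ≤ t j)
    (ht₁ : ∀ j, t j ≤ 1) (ht : ∑ j, t j = #T) :
    ∑ j, f j * t j ≤ ∑ j ∈ T, f j := by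
  classical
  have hin : 0 ≤ ∑ j ∈ T, (f j - θ) * (1 - t j) :=
    sum_nonneg fun j hj => mul_nonneg (sub_nonneg.2 (hT j hj)) (sub_nonneg.2 (ht₁ j))
  have hout : 0 ≤ ∑ j ∈ Tᶜ, (θ - f j) * t j :=
    sum_nonneg fun j hj => mul_nonneg (sub_nonneg.2 (hTc j (mem_compl.1 hj))) (ht₀ j)
  rw [← sum_add_sum_compl T t] at ht
  rw [← sum_add_sum_compl T (fun j => f j * t j)]
  simp only [mul_sub, sub_mul, mul_one, sum_sub_distrib, ← mul_sum, sum_const, nsmul_eq_mul]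
    at hin hout
  linear_combination hin + hout + θ * ht

lemma Fin.card_filter_le_val {n m : ℕ} :
    #(univ.filter (fun j : Fin n => m ≤ (j : ℕ))) = n - m := by
  have h := card_filter_add_card_filter_not (s := univ) (fun j : Fin n => (j : ℕ) < m)
  simp only [not_lt, card_univ, Fintype.card_fin, Fin.card_filter_val_lt] at h
  omega

section
variable {𝕜 ι : Type*} [RCLike 𝕜] [Fintype ι] [DecidableEq ι] {A : Matrix ι ι 𝕜}

lemma Matrix.IsHermitian.toEuclideanLin_eigenvectorBasis (hA : A.IsHermitian) (j : ι) :
    toEuclideanLin A (hA.eigenvectorBasis j) = (hA.eigenvalues j : 𝕜) • hA.eigenvectorBasis j := by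
  rw [toLpLin_apply, hA.mulVec_eigenvectorBasis, RCLike.real_smul_eq_coe_smul (K := 𝕜)]
  rfl

lemma Matrix.IsHermitian.re_inner_toEuclideanLin (hA : A.IsHermitian) (x : EuclideanSpace 𝕜 ι) :
    re ⟪x, toEuclideanLin A x⟫_𝕜 =
      ∑ j, hA.eigenvalues j * ‖⟪hA.eigenvectorBasis j, x⟫_𝕜‖ ^ 2 := by
  have hAx : toEuclideanLin A x =
      ∑ j, (hA.eigenvalues j * ⟪hA.eigenvectorBasis j, x⟫_𝕜) • hA.eigenvectorBasis j := by
    conv_lhs => rw [← hA.eigenvectorBasis.sum_repr' x]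
    simp only [map_sum, map_smul, hA.toEuclideanLin_eigenvectorBasis, smul_smul, mul_comm]
  rw [hAx, inner_sum, map_sum]
  refine Fintype.sum_congr _ _ fun j => ?_
  rw [inner_smul_right, ← inner_conj_symm, mul_assoc, RCLike.conj_mul, norm_conj, ← ofReal_pow,
    ← ofReal_mul, ofReal_re]

end

theorem Matrix.IsHermitian.sum_re_inner_le_sum_top {𝕜 : Type*} [RCLike 𝕜] {n k : ℕ}
    {A : Matrix (Fin n) (Fin n) 𝕜}
    (hA : A.IsHermitian) {lam : Fin n → ℝ} (hmono : Monotone lam) {σ : Equiv.Perm (Fin n)}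
    (hσ : lam = hA.eigenvalues ∘ σ) {w : Fin k → EuclideanSpace 𝕜 (Fin n)}
    (hw : Orthonormal 𝕜 w) :
    ∑ i, re ⟪w i, toEuclideanLin A (w i)⟫_𝕜 ≤
      ∑ j ∈ univ.filter (fun j : Fin n => n - k ≤ (j : ℕ)), lam j := by
  have hkn : k ≤ n := by simpa using hw.linearIndependent.fintype_card_le_finrank
  obtain rfl | hk := k.eq_zero_or_pos
  · simp [filter_false_of_mem fun (j : Fin n) _ => not_le.2 j.isLt]
  let b := hA.eigenvectorBasis
  have hLHS : ∑ i, re ⟪w i, toEuclideanLin A (w i)⟫_𝕜 =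
      ∑ j, lam j * ∑ i, ‖⟪b (σ j), w i⟫_𝕜‖ ^ 2 := by
    simp only [hA.re_inner_toEuclideanLin, mul_sum, hσ, Function.comp_apply]
    rw [sum_comm]
    exact (Equiv.sum_comp σ fun j => ∑ i, hA.eigenvalues j * ‖⟪b j, w i⟫_𝕜‖ ^ 2).symm
  rw [hLHS]
  refine sum_mul_le_sum_of_threshold (lam ⟨n - k, by omega⟩) (fun j hj => hmono ?_)
    (fun j hj => hmono ?_) (fun j => sum_nonneg fun i _ => sq_nonneg _) (fun j => ?_) ?_
  · simpa [Fin.le_def] using hj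
  · simp only [mem_filter, mem_univ, true_and, not_le] at hj
    exact Fin.le_def.2 (show (j : ℕ) ≤ n - k by omega)
  · calc ∑ i, ‖⟪b (σ j), w i⟫_𝕜‖ ^ 2 = ∑ i, ‖⟪w i, b (σ j)⟫_𝕜‖ ^ 2 := by
          simp only [norm_inner_symm]
      _ ≤ ‖b (σ j)‖ ^ 2 := hw.sum_inner_products_le _
      _ = 1 := by simp [b.orthonormal.1]
  · rw [Equiv.sum_comp σ (fun j => ∑ i, ‖⟪b j, w i⟫_𝕜‖ ^ 2), sum_comm, Fin.card_filter_le_val,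
      Nat.sub_sub_self hkn]
    simp [b.sum_sq_norm_inner_right, hw.1]

section
variable {V κ : Type*} [Fintype V] [DecidableEq κ]

noncomputable def normalizedPartIndicator (P : V → κ) (i : κ) : EuclideanSpace ℝ V :=
  WithLp.toLp 2 fun v => if P v = i then (√(#{v | P v = i} : ℝ))⁻¹ else 0

variable {P : V → κ}

lemma normalizedPartIndicator_apply (i : κ) (v : V) :
    normalizedPartIndicator P i v = if P v = i then (√(#{v | P v = i} : ℝ))⁻¹ else 0 := rfl

lemma normalizedPartIndicator_mul_self (i : κ) (v : V) :
    normalizedPartIndicator P i v * normalizedPartIndicator P i v =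
      if P v = i then (#{v | P v = i} : ℝ)⁻¹ else 0 := by
  rw [normalizedPartIndicator_apply]
  split_ifs
  · rw [← mul_inv, Real.mul_self_sqrt (Nat.cast_nonneg _)]
  · rw [mul_zero]

lemma orthonormal_normalizedPartIndicator (hP : Function.Surjective P) :
    Orthonormal ℝ (normalizedPartIndicator P) := by
  rw [orthonormal_iff_ite]
  intro i j
  simp only [PiLp.inner_apply, RCLike.inner_apply, conj_trivial]
  split_ifs with hij
  · subst hij
    simp only [normalizedPartIndicator_mul_self, sum_ite, sum_const_zero, add_zero, sum_const,
      nsmul_eq_mul]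
    obtain ⟨v, rfl⟩ := hP i
    exact mul_inv_cancel₀ (Nat.cast_ne_zero.2 (card_ne_zero.2 ⟨v, by simp⟩))
  · refine sum_eq_zero fun v _ => ?_
    simp only [normalizedPartIndicator_apply]
    split_ifs <;> simp_all

lemma sum_sq_normalizedPartIndicator_sub [Fintype κ] (u v : V) :
    ∑ i, (normalizedPartIndicator P i u - normalizedPartIndicator P i v) ^ 2 =
      if P u = P v then 0
      else (#{w | P w = P u} : ℝ)⁻¹ + (#{w | P w = P v} : ℝ)⁻¹ := by
  split_ifs with h
  · simp [normalizedPartIndicator_apply, h]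
  · have hcross : ∀ i, normalizedPartIndicator P i u * normalizedPartIndicator P i v = 0 := by
      intro i
      simp only [normalizedPartIndicator_apply]
      split_ifs <;> simp_all
    have hexpand : ∀ a b : ℝ, (a - b) ^ 2 = a * a + b * b - 2 * (a * b) := fun a b => by ring
    simp only [hexpand, hcross, mul_zero, sub_zero, sum_add_distrib,
      normalizedPartIndicator_mul_self, sum_ite_eq, mem_univ, if_true]

lemma sum_inner_lapMatrix_normalizedPartIndicator [Fintype κ] [DecidableEq V] (G : SimpleGraph V)
    [DecidableRel G.Adj] :
    ∑ i, ⟪normalizedPartIndicator P i,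
        toEuclideanLin (G.lapMatrix ℝ) (normalizedPartIndicator P i)⟫_ℝ =
      (∑ u, ∑ v, if G.Adj u v ∧ P u ≠ P v then
        (#{w | P w = P u} : ℝ)⁻¹ + (#{w | P w = P v} : ℝ)⁻¹ else 0) / 2 := by
  have hquad : ∀ x : EuclideanSpace ℝ V, ⟪x, toEuclideanLin (G.lapMatrix ℝ) x⟫_ℝ =
      toLinearMap₂' ℝ (G.lapMatrix ℝ) x x := by
    intro x
    rw [EuclideanSpace.inner_eq_star_dotProduct, toLinearMap₂'_apply', star_trivial,
      dotProduct_comm]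
    rfl
  simp only [hquad, SimpleGraph.lapMatrix_toLinearMap₂', ← sum_div]
  congr 1
  rw [sum_comm]
  refine sum_congr rfl fun u _ => ?_
  rw [sum_comm]
  refine sum_congr rfl fun v _ => ?_
  by_cases hadj : G.Adj u v
  · simp only [hadj, if_true, true_and, sum_sq_normalizedPartIndicator_sub, ite_not]
  · simp [hadj]
end

lemma sum_adj_ne_eq_two_mul_sum_adj_lt {V κ : Type*} [Fintype V] [LinearOrder κ]
    (G : SimpleGraph V) [DecidableRel G.Adj] (P : V → κ) {g : V → V → ℝ}
    (hg : ∀ u v, g u v = g v u) :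
    ∑ u, ∑ v, (if G.Adj u v ∧ P u ≠ P v then g u v else 0) =
      2 * ∑ u, ∑ v, if G.Adj u v ∧ P u < P v then g u v else 0 := by
  have hsplit : ∀ u v, (if G.Adj u v ∧ P u ≠ P v then g u v else 0) =
      (if G.Adj u v ∧ P u < P v then g u v else 0) +
        (if G.Adj v u ∧ P v < P u then g v u else 0) := by
    intro u v
    simp only [G.adj_comm v u, hg v u]
    rcases lt_trichotomy (P u) (P v) with h | h | h
    · simp [h, h.ne, h.not_gt]
    · simp [h]
    · simp [h, h.ne', h.not_gt]
  simp only [hsplit, sum_add_distrib]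
  rw [sum_comm (f := fun u v => if G.Adj v u ∧ P v < P u then g v u else 0)]
  ring

lemma sum_pairCount_mul {n k : ℕ} (G : SimpleGraph (Fin n)) [DecidableRel G.Adj]
    (P : Fin n → Fin k) (F : Fin k → Fin k → ℝ) :
    ∑ p ∈ univ.filter (fun p : Fin k × Fin k => p.1 < p.2),
        (pairCount G (partSet P p.1) (partSet P p.2) : ℝ) * F p.1 p.2 =
      ∑ u, ∑ v, if G.Adj u v ∧ P u < P v then F (P u) (P v) else 0 := by
  have hterm : ∀ u v, (if G.Adj u v ∧ P u < P v then F (P u) (P v) else 0) =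
      ∑ p ∈ univ.filter (fun p : Fin k × Fin k => p.1 < p.2),
        if (P u, P v) = p then (if G.Adj u v then F p.1 p.2 else 0) else 0 := by
    intro u v
    by_cases hadj : G.Adj u v <;> simp [hadj]
  have hpair : ∀ p : Fin k × Fin k,
      (pairCount G (partSet P p.1) (partSet P p.2) : ℝ) * F p.1 p.2 =
        ∑ u, ∑ v, if (P u, P v) = p then (if G.Adj u v then F p.1 p.2 else 0) else 0 := by
    intro p
    simp only [pairCount, partSet, Nat.cast_sum, Nat.cast_ite, Nat.cast_one, Nat.cast_zero,
      sum_filter, sum_mul, ite_mul, one_mul, zero_mul, Prod.ext_iff, ite_and]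
    exact sum_congr rfl fun u _ => by split_ifs <;> simp
  simp only [hterm, hpair]
  rw [sum_comm]
  refine sum_congr rfl fun u _ => ?_
  rw [sum_comm]

theorem stmt3_general {n k : ℕ}
    (G : SimpleGraph (Fin n)) [DecidableRel G.Adj]
    (hL : (G.lapMatrix ℝ).IsHermitian)
    (lam : Fin n → ℝ) (hmono : Monotone lam)
    (hperm : ∃ σ : Equiv.Perm (Fin n), lam = hL.eigenvalues ∘ σ)
    (P : Fin n → Fin k) (hsurj : Function.Surjective P) :
    ∑ p ∈ Finset.univ.filter (fun p : Fin k × Fin k => p.1 < p.2),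
        (pairCount G (partSet P p.1) (partSet P p.2) : ℝ) *
          (1 / (partSet P p.1).card + 1 / (partSet P p.2).card)
      ≤ ∑ j ∈ Finset.univ.filter (fun j : Fin n => n - k ≤ (j : ℕ)), lam j := by
  obtain ⟨σ, hσ⟩ := hperm
  calc _ = ∑ u, ∑ v, if G.Adj u v ∧ P u < P v then
          (#{w | P w = P u} : ℝ)⁻¹ + (#{w | P w = P v} : ℝ)⁻¹ else 0 := by
        simp only [one_div]
        exact sum_pairCount_mul G P fun a b => (#{w | P w = a} : ℝ)⁻¹ + (#{w | P w = b} : ℝ)⁻¹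
    _ = ∑ i, re ⟪normalizedPartIndicator P i,
          toEuclideanLin (G.lapMatrix ℝ) (normalizedPartIndicator P i)⟫_ℝ := by
        simp only [re_to_real]
        rw [sum_inner_lapMatrix_normalizedPartIndicator,
          sum_adj_ne_eq_two_mul_sum_adj_lt G P fun u v => add_comm _ _]
        ring
    _ ≤ _ := hL.sum_re_inner_le_sum_top hmono hσ (orthonormal_normalizedPartIndicator hsurj)

/-- for the increasing sequence `lam` of Laplacian eigenvalues,
`λ_{n-k+1} + ⋯ + λ_n ≥ ∑_{i<j} e(P i, P j)(1/|P i| + 1/|P j|)`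
(0-based indices `n - k ≤ j ≤ n - 1`). -/
theorem stmt3 {n k : ℕ} (hk : 1 < k) (hkn : k < n)
    (G : SimpleGraph (Fin n)) [DecidableRel G.Adj]
    (hL : (G.lapMatrix ℝ).IsHermitian)
    (lam : Fin n → ℝ) (hmono : Monotone lam)
    (hperm : ∃ σ : Equiv.Perm (Fin n), lam = hL.eigenvalues ∘ σ)
    (P : Fin n → Fin k) (hsurj : Function.Surjective P) :
    ∑ p ∈ Finset.univ.filter (fun p : Fin k × Fin k => p.1 < p.2),
        (pairCount G (partSet P p.1) (partSet P p.2) : ℝ) *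
          (1 / (partSet P p.1).card + 1 / (partSet P p.2).card)
      ≤ ∑ j ∈ Finset.univ.filter (fun j : Fin n => n - k ≤ (j : ℕ)), lam j :=
  stmt3_general G hL lam hmono hperm P hsurj
end

section
/- If equality holds in the inequality μ₁(G) + ... + μ_k(G) ≥ Σᵢ 2e(Pᵢ)/|Pᵢ| for a partition [n] = P₁ ∪ ... ∪ P_k, then the partition is equitable for G, i.e., each induced subgraph G[Pᵢ] is regular and each bipartite graph G[Pᵢ,Pⱼ] (i ≠ j) is semiregular (vertices in the same class have equal degree). -/
/-- The degree of `v` into the set `X`. -/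
def degIn {n : ℕ} (G : SimpleGraph (Fin n)) [DecidableRel G.Adj]
    (X : Finset (Fin n)) (v : Fin n) : ℕ :=
  (X.filter (fun u => G.Adj v u)).card

/-!
Let `y i` be the indicator vector of the part `P i` divided by `√|P i|`. These vectors are
orthonormal and `⟪y i, A y i⟫ = 2e(P i)/|P i|`. In an orthonormal eigenbasis `b j` of `A` the
Rayleigh sum becomes `∑ j, μ j * c j` with weights `c j = ∑ i, ⟪y i, b j⟫²` in `[0, 1]` (Bessel)
summing to `k` (Parseval), so it is at most `μ₁ + ⋯ + μ_k`, and equality forces `c j = 1` when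
`μ j > μ_k` and `c j = 0` when `μ j < μ_k`. So the eigenvectors above `μ_k` lie in `span y` and
those below are orthogonal to it, which makes `span y` invariant under `A`. Every vector of
`span y` is constant on the parts, in particular `A 1_{P j}`, whose value at `u` is the number
of neighbours of `u` in `P j`.
-/

open Finset Submodule Matrix Function
open scoped RealInnerProductSpace

theorem eq_one_and_eq_zero_of_sum_mul_eq_sum {ι : Type*} [Fintype ι] [DecidableEq ι]
    {S : Finset ι} {μ c : ι → ℝ} {t : ℝ} (hS : ∀ j ∈ S, t ≤ μ j) (hSc : ∀ j ∉ S, μ j ≤ t)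
    (hc0 : ∀ j, 0 ≤ c j) (hc1 : ∀ j, c j ≤ 1) (hc : ∑ j, c j = #S)
    (heq : ∑ j ∈ S, μ j = ∑ j, μ j * c j) (j : ι) :
    (t < μ j → c j = 1) ∧ (μ j < t → c j = 0) := by
  set d : ι → ℝ := fun j => (μ j - t) * (c j - if j ∈ S then 1 else 0)
  have hd : ∀ j ∈ univ, d j ≤ 0 := by
    intro j _
    by_cases hj : j ∈ S
    · simp only [d, hj, if_true]
      exact mul_nonpos_of_nonneg_of_nonpos (sub_nonneg.2 (hS j hj)) (by linarith [hc1 j])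
    · simp only [d, hj, if_false, sub_zero]
      exact mul_nonpos_of_nonpos_of_nonneg (sub_nonpos.2 (hSc j hj)) (hc0 j)
  have hsum : ∑ j, d j = 0 := by
    simp only [d, mul_sub, sub_mul, mul_ite, mul_one, mul_zero, sum_sub_distrib, ← mul_sum,
      sum_ite_mem, univ_inter, sum_const, nsmul_eq_mul, hc, ← heq]
    ring
  have hdj := (sum_eq_zero_iff_of_nonpos hd).1 hsum j (mem_univ j)
  constructor
  · intro hj
    have hjS : j ∈ S := by_contra fun h => (hSc j h).not_gt hj
    simp only [d, hjS, if_true, mul_eq_zero, sub_eq_zero] at hdj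
    exact hdj.resolve_left hj.ne'
  · intro hj
    have hjS : j ∉ S := fun h => (hS j h).not_gt hj
    simp only [d, hjS, if_false, sub_zero, mul_eq_zero, sub_eq_zero] at hdj
    exact hdj.resolve_left hj.ne

section InnerProductSpace

variable {ι E : Type*} [Fintype ι] [NormedAddCommGroup E] [InnerProductSpace ℝ E]

theorem Orthonormal.norm_sub_sum_inner_smul_sq {v : ι → E} (hv : Orthonormal ℝ v) (x : E) :
    ‖x - ∑ i, ⟪v i, x⟫ • v i‖ ^ 2 = ‖x‖ ^ 2 - ∑ i, ⟪v i, x⟫ ^ 2 := by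
  have hnorm : ‖∑ i, ⟪v i, x⟫ • v i‖ ^ 2 = ∑ i, ⟪v i, x⟫ ^ 2 := by
    rw [← real_inner_self_eq_norm_sq, hv.inner_sum]
    simp [sq]
  have hinner : ⟪x, ∑ i, ⟪v i, x⟫ • v i⟫ = ∑ i, ⟪v i, x⟫ ^ 2 := by
    simp [inner_sum, real_inner_smul_right, real_inner_comm x, sq]
  rw [norm_sub_sq_real, hnorm, hinner]
  ring

theorem Orthonormal.mem_span_range_of_sum_inner_sq_eq {v : ι → E} (hv : Orthonormal ℝ v) {x : E}
    (hx : ∑ i, ⟪v i, x⟫ ^ 2 = ‖x‖ ^ 2) : x ∈ span ℝ (Set.range v) := by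
  have hx' : x = ∑ i, ⟪v i, x⟫ • v i := by
    rw [← sub_eq_zero, ← norm_eq_zero, ← sq_eq_zero_iff,
      hv.norm_sub_sum_inner_smul_sq, hx, sub_self]
  rw [hx']
  exact sum_mem fun i _ => smul_mem _ _ (subset_span ⟨i, rfl⟩)

theorem OrthonormalBasis.apply_eq_sum_of_apply_eq_smul (b : OrthonormalBasis ι ℝ E)
    {T : E →ₗ[ℝ] E} {μ : ι → ℝ} (hT : ∀ j, T (b j) = μ j • b j) (x : E) :
    T x = ∑ j, (μ j * ⟪b j, x⟫) • b j := by
  conv_lhs => rw [← b.sum_repr' x]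
  simp only [map_sum, map_smul, hT, smul_smul, mul_comm]

theorem OrthonormalBasis.apply_mem_of_eigenvectors_above_mem (b : OrthonormalBasis ι ℝ E)
    {T : E →ₗ[ℝ] E} {μ : ι → ℝ} (hT : ∀ j, T (b j) = μ j • b j) {V : Submodule ℝ E} {x : E}
    (hx : x ∈ V) {t : ℝ} (hlt : ∀ j, μ j < t → ⟪b j, x⟫ = 0) (hgt : ∀ j, t < μ j → b j ∈ V) :
    T x ∈ V := by
  have hTx : T x = t • x + ∑ j, ((μ j - t) * ⟪b j, x⟫) • b j := by
    rw [b.apply_eq_sum_of_apply_eq_smul hT]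
    nth_rw 2 [← b.sum_repr' x]
    rw [smul_sum, ← sum_add_distrib]
    congr 1 with j
    rw [smul_smul, ← add_smul]
    ring_nf
  rw [hTx]
  refine add_mem (smul_mem _ _ hx) (sum_mem fun j _ => ?_)
  rcases lt_trichotomy (μ j) t with hj | hj | hj
  · simp [hlt j hj]
  · simp [hj]
  · exact smul_mem _ _ (hgt j hj)

theorem OrthonormalBasis.inner_apply_self_eq_sum (b : OrthonormalBasis ι ℝ E)
    {T : E →ₗ[ℝ] E} {μ : ι → ℝ} (hT : ∀ j, T (b j) = μ j • b j) (x : E) :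
    ⟪x, T x⟫ = ∑ j, μ j * ⟪x, b j⟫ ^ 2 := by
  simp [b.apply_eq_sum_of_apply_eq_smul hT, inner_sum, real_inner_smul_right, real_inner_comm x,
    sq, mul_assoc]

theorem OrthonormalBasis.sum_sum_inner_sq_eq_card {κ : Type*} [Fintype κ]
    (b : OrthonormalBasis ι ℝ E) {y : κ → E} (hy : Orthonormal ℝ y) :
    ∑ j, ∑ i, ⟪y i, b j⟫ ^ 2 = Fintype.card κ := by
  rw [sum_comm]
  simp [real_inner_comm (b _), b.sum_sq_inner_right, hy.1]

theorem Orthonormal.apply_mem_span_range_of_sum_eigenvalues_eq {n k : ℕ}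
    (b : OrthonormalBasis (Fin n) ℝ E) {T : E →ₗ[ℝ] E} {μ : Fin n → ℝ} (hμ : Antitone μ)
    (hT : ∀ j, T (b j) = μ j • b j) (hkn : k ≤ n) {y : Fin k → E} (hy : Orthonormal ℝ y)
    (heq : ∑ i : Fin k, μ (Fin.castLE hkn i) = ∑ i, ⟪y i, T (y i)⟫) (i : Fin k) :
    T (y i) ∈ span ℝ (Set.range y) := by
  set c : Fin n → ℝ := fun j => ∑ i, ⟪y i, b j⟫ ^ 2
  have hc0 : ∀ j, 0 ≤ c j := fun j => sum_nonneg fun i _ => sq_nonneg _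
  have hc1 : ∀ j, c j ≤ 1 := fun j => by
    simpa [c, b.orthonormal.1 j] using hy.sum_inner_products_le (b j) (s := univ)
  set S : Finset (Fin n) := univ.map (Fin.castLEEmb hkn)
  have hmemS : ∀ j : Fin n, j ∈ S ↔ (j : ℕ) < k := fun j =>
    ⟨fun hj => by obtain ⟨l, -, rfl⟩ := mem_map.1 hj; exact l.isLt,
      fun hj => mem_map.2 ⟨⟨j, hj⟩, mem_univ _, rfl⟩⟩
  set t := μ ⟨k - 1, by have := i.isLt; omega⟩
  have hS : ∀ j ∈ S, t ≤ μ j := fun j hj => hμ (Fin.mk_le_mk.2 (by rw [hmemS] at hj; omega))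
  have hSc : ∀ j ∉ S, μ j ≤ t := fun j hj => hμ (Fin.mk_le_mk.2 (by rw [hmemS] at hj; omega))
  have hsum : ∑ j ∈ S, μ j = ∑ j, μ j * c j := by
    rw [sum_map]
    refine heq.trans ?_
    simp only [c, b.inner_apply_self_eq_sum hT, mul_sum]
    exact sum_comm
  have hcS : ∑ j, c j = #S := by simpa [S] using b.sum_sum_inner_sq_eq_card hy
  have key := eq_one_and_eq_zero_of_sum_mul_eq_sum hS hSc hc0 hc1 hcS hsum
  refine b.apply_mem_of_eigenvectors_above_mem hT (subset_span ⟨i, rfl⟩) (t := t)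
    (fun j hj => ?_) (fun j hj => ?_)
  · rw [real_inner_comm, ← sq_eq_zero_iff]
    exact (sum_eq_zero_iff_of_nonneg fun i _ => sq_nonneg _).1 ((key j).2 hj) i (mem_univ i)
  · refine hy.mem_span_range_of_sum_inner_sq_eq ?_
    rw [b.orthonormal.1 j]
    simpa using (key j).1 hj

end InnerProductSpace

section Indicator

variable {n : ℕ}

def indicatorVec (X : Finset (Fin n)) : EuclideanSpace ℝ (Fin n) :=
  WithLp.toLp 2 fun u => if u ∈ X then 1 else 0

@[simp]
theorem indicatorVec_apply (X : Finset (Fin n)) (u : Fin n) :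
    indicatorVec X u = if u ∈ X then 1 else 0 := rfl

theorem inner_indicatorVec (X Y : Finset (Fin n)) :
    ⟪indicatorVec X, indicatorVec Y⟫ = #(X ∩ Y) := by
  simp [PiLp.inner_apply, ← ite_and, sum_boole, filter_and]

variable (G : SimpleGraph (Fin n)) [DecidableRel G.Adj]

theorem toEuclideanLin_adjMatrix_indicatorVec_apply (X : Finset (Fin n)) (u : Fin n) :
    toEuclideanLin (G.adjMatrix ℝ) (indicatorVec X) u = degIn G X u := by
  simp [toLpLin_apply, mulVec, dotProduct, degIn, sum_boole]

theorem inner_indicatorVec_toEuclideanLin_adjMatrix (X Y : Finset (Fin n)) :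
    ⟪indicatorVec X, toEuclideanLin (G.adjMatrix ℝ) (indicatorVec Y)⟫ = pairCount G X Y := by
  simp [PiLp.inner_apply, toEuclideanLin_adjMatrix_indicatorVec_apply, pairCount, degIn]

end Indicator

theorem orthonormal_inv_sqrt_card_smul_indicatorVec {n : ℕ} {ι : Type*} {X : ι → Finset (Fin n)}
    (hne : ∀ i, (X i).Nonempty) (hdisj : Pairwise (Disjoint on X)) :
    Orthonormal ℝ fun i => (√(#(X i) : ℝ))⁻¹ • indicatorVec (X i) := by
  classical
  rw [orthonormal_iff_ite]
  intro i j
  rw [real_inner_smul_left, real_inner_smul_right, inner_indicatorVec]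
  split_ifs with h
  · subst h
    have hpos : (0 : ℝ) < #(X i) := by exact_mod_cast (hne i).card_pos
    rw [inter_self]
    field_simp
    rw [Real.sq_sqrt hpos.le]
  · simp [disjoint_iff_inter_eq_empty.1 (hdisj h)]

theorem apply_eq_apply_of_mem_span_range {ι V : Type*} {g : ι → EuclideanSpace ℝ V} {u v : V}
    (hg : ∀ i, g i u = g i v) {f : EuclideanSpace ℝ V} (hf : f ∈ span ℝ (Set.range g)) :
    f u = f v := by
  induction hf using Submodule.span_induction with
  | mem x hx => obtain ⟨i, rfl⟩ := hx; exact hg i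
  | zero => rfl
  | add x y _ _ hx hy => simp [hx, hy]
  | smul a x _ hx => simp [hx]

theorem stmt4_general {n k : ℕ} (hkn : k < n)
    (G : SimpleGraph (Fin n)) [DecidableRel G.Adj]
    (hA : (G.adjMatrix ℝ).IsHermitian)
    (μ : Fin n → ℝ) (hmono : Antitone μ)
    (hperm : ∃ σ : Equiv.Perm (Fin n), μ = hA.eigenvalues ∘ σ)
    (P : Fin n → Fin k) (hsurj : Function.Surjective P)
    (heq : ∑ i : Fin k, μ (Fin.castLE hkn.le i)
      = ∑ i : Fin k, (pairCount G (partSet P i) (partSet P i) : ℝ) / (partSet P i).card) :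
    ∀ i j : Fin k, ∀ u ∈ partSet P i, ∀ v ∈ partSet P i,
      degIn G (partSet P j) u = degIn G (partSet P j) v := by
  obtain ⟨σ, rfl⟩ := hperm
  set T := toEuclideanLin (G.adjMatrix ℝ)
  set m : Fin k → ℝ := fun i => #(partSet P i)
  have hm : ∀ i, 0 < m i := fun i => by
    obtain ⟨u, hu⟩ := hsurj i
    exact Nat.cast_pos.2 (card_pos.2 ⟨u, by simp [partSet, hu]⟩)
  set y : Fin k → EuclideanSpace ℝ (Fin n) := fun i => (√(m i))⁻¹ • indicatorVec (partSet P i)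
  have hy : Orthonormal ℝ y := orthonormal_inv_sqrt_card_smul_indicatorVec
    (fun i => card_pos.1 (Nat.cast_pos.1 (hm i)))
    (fun i j hij => disjoint_filter.2 fun u _ hi hj => hij (hi.symm.trans hj))
  have hrayleigh : ∀ i, ⟪y i, T (y i)⟫ = pairCount G (partSet P i) (partSet P i) / m i := by
    intro i
    rw [map_smul, real_inner_smul_left, real_inner_smul_right,
      inner_indicatorVec_toEuclideanLin_adjMatrix, ← mul_assoc, ← mul_inv,
      Real.mul_self_sqrt (hm i).le, inv_mul_eq_div]
  set b := hA.eigenvectorBasis.reindex σ.symm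
  have hT : ∀ j, T (b j) = (hA.eigenvalues ∘ σ) j • b j := fun j => by
    simp [T, b, toLpLin_apply, hA.mulVec_eigenvectorBasis]
  have hspan := hy.apply_mem_span_range_of_sum_eigenvalues_eq b hmono hT hkn.le
    (heq.trans (by simp only [hrayleigh, m]))
  intro i j u hu v hv
  have hmem : T (indicatorVec (partSet P j)) ∈ span ℝ (Set.range y) := by
    have hscale : indicatorVec (partSet P j) = √(m j) • y j := by
      rw [smul_smul, mul_inv_cancel₀ (Real.sqrt_pos.2 (hm j)).ne', one_smul]
    rw [hscale, map_smul]
    exact smul_mem _ _ (hspan j)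
  have hPuv : P u = P v := (mem_filter.1 hu).2.trans (mem_filter.1 hv).2.symm
  have hconst := apply_eq_apply_of_mem_span_range (u := u) (v := v)
    (fun l => by simp [y, partSet, hPuv]) hmem
  simpa [T, toEuclideanLin_adjMatrix_indicatorVec_apply] using hconst

/-- if equality holds in `μ₁ + ⋯ + μ_k ≥ ∑ i, 2e(P i)/|P i|`,
then the partition is equitable for `G`: any two vertices of the same part have
the same number of neighbours in every part (this says each `G[P i]` is regular
and each `G[P i, P j]` is semiregular). -/
theorem stmt4 {n k : ℕ} (hk : 1 < k) (hkn : k < n)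
    (G : SimpleGraph (Fin n)) [DecidableRel G.Adj]
    (hA : (G.adjMatrix ℝ).IsHermitian)
    (μ : Fin n → ℝ) (hmono : Antitone μ)
    (hperm : ∃ σ : Equiv.Perm (Fin n), μ = hA.eigenvalues ∘ σ)
    (P : Fin n → Fin k) (hsurj : Function.Surjective P)
    (heq : ∑ i : Fin k, μ (Fin.castLE hkn.le i)
      = ∑ i : Fin k, (pairCount G (partSet P i) (partSet P i) : ℝ) / (partSet P i).card) :
    ∀ i j : Fin k, ∀ u ∈ partSet P i, ∀ v ∈ partSet P i,
      degIn G (partSet P j) u = degIn G (partSet P j) v :=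
  stmt4_general hkn G hA μ hmono hperm P hsurj heq
end

section
/- Let A be a nonnegative real m×n matrix such that AA* and A*A are irreducible, P a partition of [m] and Q a partition of [n], and suppose the partition P×Q is equitable for A, i.e., every block A[P_p, Q_q] has equal row sums and equal column sums. Then σ₁(A) = σ₁(A|P×Q). -/
open Matrix

noncomputable def quotMat {m n k l : ℕ} (A : Matrix (Fin m) (Fin n) ℝ)
    (P : Fin m → Fin k) (Q : Fin n → Fin l) : Matrix (Fin k) (Fin l) ℝ :=
  fun p q => (1 / Real.sqrt (((partSet P p).card : ℝ) * ((partSet Q q).card : ℝ))) *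
    ∑ i ∈ partSet P p, ∑ j ∈ partSet Q q, A i j

def BlockRegular {m n : ℕ} (A : Matrix (Fin m) (Fin n) ℝ)
    (R : Finset (Fin m)) (C : Finset (Fin n)) : Prop :=
  (∀ i ∈ R, ∀ i' ∈ R, ∑ j ∈ C, A i j = ∑ j ∈ C, A i' j) ∧
  (∀ j ∈ C, ∀ j' ∈ C, ∑ i ∈ R, A i j = ∑ i ∈ R, A i j')

def MatIrred {n : ℕ} (A : Matrix (Fin n) (Fin n) ℝ) : Prop :=
  ∀ S : Finset (Fin n), S.Nonempty → S ≠ Finset.univ →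
    ∃ i ∈ S, ∃ j ∈ Sᶜ, A i j ≠ 0

/-- Largest singular value of a real matrix. -/
noncomputable def sigma1R {m n : ℕ} (A : Matrix (Fin m) (Fin n) ℝ) : ℝ :=
  Real.sqrt (⨆ j : Fin n, (Matrix.isHermitian_conjTranspose_mul_self A).eigenvalues j)

/-! Let `S`, `T` be the matrices whose columns are the normalized indicator vectors of the parts of
`P` and `Q`, and `B = A|P×Q`. Equitability gives `A T = S B` and `Aᵀ S = T Bᵀ`, hence
`AᵀA T = T BᵀB`. Since `T` has orthonormal columns, it maps a top eigenvector of `BᵀB` to an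
eigenvector of `AᵀA`, so `λ₁(BᵀB) ≤ λ₁(AᵀA)`. Conversely `Tᵀ` maps eigenvectors of `AᵀA` to
eigenvectors of `BᵀB`; as `AᵀA` is entrywise nonnegative, its top eigenvalue has a nonnegative
eigenvector (Perron–Frobenius), which the nonnegative `Tᵀ` cannot annihilate. -/

namespace Matrix

variable {ι : Type*} [Fintype ι] [DecidableEq ι] {M : Matrix ι ι ℝ}

theorem mem_spectrum_iff_exists_mulVec_eq_smul {μ : ℝ} :
    μ ∈ spectrum ℝ M ↔ ∃ x ≠ 0, M *ᵥ x = μ • x := by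
  rw [← spectrum_toLin', ← Module.End.hasEigenvalue_iff_mem_spectrum, Module.End.hasEigenvalue_iff,
    Submodule.ne_bot_iff]
  simp [and_comm]

namespace IsHermitian

variable (hM : M.IsHermitian)
include hM

theorem le_iSup_eigenvalues_of_mulVec_eq_smul {x : ι → ℝ} {μ : ℝ} (hx : x ≠ 0)
    (hμ : M *ᵥ x = μ • x) : μ ≤ ⨆ i, hM.eigenvalues i := by
  obtain ⟨i, rfl⟩ : μ ∈ Set.range hM.eigenvalues := by
    rw [← hM.spectrum_real_eq_range_eigenvalues]
    exact mem_spectrum_iff_exists_mulVec_eq_smul.2 ⟨x, hx, hμ⟩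
  exact le_ciSup (Set.finite_range _).bddAbove i

theorem exists_mulVec_eq_iSup_eigenvalues_smul [Nonempty ι] :
    ∃ x ≠ 0, M *ᵥ x = (⨆ i, hM.eigenvalues i) • x := by
  obtain ⟨i, hi⟩ := exists_eq_ciSup_of_finite (f := hM.eigenvalues)
  rw [← mem_spectrum_iff_exists_mulVec_eq_smul, ← hi, hM.spectrum_real_eq_range_eigenvalues]
  exact Set.mem_range_self i

open MatrixOrder in
theorem posSemidef_iSup_eigenvalues_smul_one_sub :
    ((⨆ i, hM.eigenvalues i) • (1 : Matrix ι ι ℝ) - M).PosSemidef := by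
  rw [← Algebra.algebraMap_eq_smul_one, ← le_iff]
  refine (le_algebraMap_iff_spectrum_le hM.isSelfAdjoint).2 fun μ hμ => ?_
  rw [hM.spectrum_real_eq_range_eigenvalues] at hμ
  obtain ⟨i, rfl⟩ := hμ
  exact le_ciSup (Set.finite_range _).bddAbove i

theorem exists_nonneg_mulVec_eq_iSup_eigenvalues_smul [Nonempty ι] (hM₀ : ∀ i j, 0 ≤ M i j) :
    ∃ v ≠ 0, 0 ≤ v ∧ M *ᵥ v = (⨆ i, hM.eigenvalues i) • v := by
  set r := ⨆ i, hM.eigenvalues i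
  obtain ⟨w, hw, hMw⟩ := hM.exists_mulVec_eq_iSup_eigenvalues_smul
  have hPSD := hM.posSemidef_iSup_eigenvalues_smul_one_sub
  have hquad (x : ι → ℝ) : x ⬝ᵥ (r • (1 : Matrix ι ι ℝ) - M) *ᵥ x = r * (x ⬝ᵥ x) - x ⬝ᵥ M *ᵥ x := by
    simp [sub_mulVec, dotProduct_sub, smul_mulVec, dotProduct_smul]
  -- `|w|` has at least the Rayleigh quotient of `w`, which is already maximal
  have habs : w ⬝ᵥ M *ᵥ w ≤ |w| ⬝ᵥ M *ᵥ |w| := by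
    simp only [dotProduct, mulVec, Finset.mul_sum]
    refine Finset.sum_le_sum fun i _ => Finset.sum_le_sum fun j _ => ?_
    calc w i * (M i j * w j) ≤ |w i * (M i j * w j)| := le_abs_self _
      _ = |w| i * (M i j * |w| j) := by simp [abs_mul, abs_of_nonneg (hM₀ i j)]
  have hnorm : |w| ⬝ᵥ |w| = w ⬝ᵥ w := by
    simp [dotProduct, abs_mul_abs_self]
  have hzero : star |w| ⬝ᵥ (r • (1 : Matrix ι ι ℝ) - M) *ᵥ |w| = 0 := by
    refine le_antisymm ?_ (hPSD.dotProduct_mulVec_nonneg _)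
    rw [star_trivial, hquad, hnorm]
    rw [hMw, dotProduct_smul, smul_eq_mul] at habs
    linarith
  refine ⟨|w|, by simpa using hw, abs_nonneg w, ?_⟩
  rw [hPSD.dotProduct_mulVec_zero_iff, sub_mulVec, smul_mulVec, one_mulVec, sub_eq_zero] at hzero
  exact hzero.symm

variable {κ : Type*} [Fintype κ] [DecidableEq κ] {N : Matrix κ κ ℝ} {T : Matrix ι κ ℝ}

theorem iSup_eigenvalues_le_of_mul_eq_mul [Nonempty κ] (hN : N.IsHermitian) (hT : Tᴴ * T = 1)
    (hMT : M * T = T * N) : ⨆ j, hN.eigenvalues j ≤ ⨆ i, hM.eigenvalues i := by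
  obtain ⟨x, hx, hNx⟩ := hN.exists_mulVec_eq_iSup_eigenvalues_smul
  refine hM.le_iSup_eigenvalues_of_mulVec_eq_smul (x := T *ᵥ x) (fun hTx => hx ?_) ?_
  · simpa only [mulVec_mulVec, hT, one_mulVec, mulVec_zero] using congrArg (Tᴴ *ᵥ ·) hTx
  · rw [mulVec_mulVec, hMT, ← mulVec_mulVec, hNx, mulVec_smul]

theorem iSup_eigenvalues_le_of_mul_eq_mul_of_nonneg [Nonempty ι] (hN : N.IsHermitian)
    (hM₀ : ∀ i j, 0 ≤ M i j) (hT₀ : ∀ i j, 0 ≤ T i j) (hT : ∀ i, ∃ j, 0 < T i j)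
    (hMT : M * T = T * N) : ⨆ i, hM.eigenvalues i ≤ ⨆ j, hN.eigenvalues j := by
  obtain ⟨v, hv, hv₀, hMv⟩ := hM.exists_nonneg_mulVec_eq_iSup_eigenvalues_smul hM₀
  have hTM : N * Tᴴ = Tᴴ * M := by
    rw [← hN.eq, ← hM.eq, ← conjTranspose_mul, ← conjTranspose_mul, hMT]
  refine hN.le_iSup_eigenvalues_of_mulVec_eq_smul (x := Tᴴ *ᵥ v) ?_ ?_
  · obtain ⟨i, hi⟩ := Function.ne_iff.1 hv
    obtain ⟨j, hj⟩ := hT i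
    refine Function.ne_iff.2 ⟨j, (?_ : 0 < (Tᴴ *ᵥ v) j).ne'⟩
    calc 0 < T i j * v i := mul_pos hj ((hv₀ i).lt_of_ne' hi)
      _ ≤ ∑ i', T i' j * v i' :=
        Finset.single_le_sum (f := fun i' => T i' j * v i')
          (fun i' _ => mul_nonneg (hT₀ i' j) (hv₀ i')) (Finset.mem_univ i)
      _ = (Tᴴ *ᵥ v) j := by simp [mulVec, dotProduct]
  · rw [mulVec_mulVec, hTM, ← mulVec_mulVec, hMv, mulVec_smul]

end IsHermitian
end Matrix

theorem mem_partSet {n k : ℕ} {P : Fin n → Fin k} {i : Fin n} {p : Fin k} :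
    i ∈ partSet P p ↔ P i = p := by
  simp [partSet]

theorem card_partSet_self_pos {n k : ℕ} (P : Fin n → Fin k) (i : Fin n) :
    0 < (partSet P (P i)).card :=
  Finset.card_pos.2 ⟨i, mem_partSet.2 rfl⟩

-- `quotMat A P Q = (partCharMat P)ᵀ * A * partCharMat Q`
noncomputable def partCharMat {n k : ℕ} (P : Fin n → Fin k) : Matrix (Fin n) (Fin k) ℝ :=
  of fun i p => if P i = p then 1 / Real.sqrt (partSet P p).card else 0

section partCharMat

variable {n k : ℕ} (P : Fin n → Fin k)

theorem partCharMat_nonneg (i : Fin n) (p : Fin k) : 0 ≤ partCharMat P i p := by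
  simp only [partCharMat, of_apply]; split_ifs <;> positivity

theorem partCharMat_apply_self_pos (i : Fin n) : 0 < partCharMat P i (P i) := by
  simpa [partCharMat] using card_partSet_self_pos P i

theorem sum_mul_partCharMat (f : Fin n → ℝ) (p : Fin k) :
    ∑ i, f i * partCharMat P i p = (∑ i ∈ partSet P p, f i) / Real.sqrt (partSet P p).card := by
  simp [partCharMat, partSet, Finset.sum_filter, Finset.sum_mul, div_eq_mul_inv, ite_mul]

theorem partCharMat_mul_apply {l : ℕ} (X : Matrix (Fin k) (Fin l) ℝ) (i : Fin n) (q : Fin l) :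
    (partCharMat P * X) i q = X (P i) q / Real.sqrt (partSet P (P i)).card := by
  simp [mul_apply, partCharMat, div_eq_inv_mul]

theorem partCharMat_transpose_mul_self (hP : Function.Surjective P) :
    (partCharMat P)ᵀ * partCharMat P = 1 := by
  ext p p'
  simp only [mul_apply, transpose_apply]
  rw [sum_mul_partCharMat]
  obtain ⟨i, rfl⟩ := hP p'
  have hc : (0 : ℝ) < (partSet P (P i)).card := by exact_mod_cast card_partSet_self_pos P i
  rw [Finset.sum_congr rfl fun j hj => by rw [partCharMat, of_apply, mem_partSet.1 hj]]
  by_cases h : P i = p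
  · subst h
    simp only [Finset.sum_const, nsmul_eq_mul, one_div, if_true, one_apply_eq]
    rw [div_eq_mul_inv, mul_assoc, ← mul_inv, Real.mul_self_sqrt hc.le, mul_inv_cancel₀ hc.ne']
  · simp [h, Ne.symm h]

end partCharMat

theorem quotMat_transpose {m n k l : ℕ} (A : Matrix (Fin m) (Fin n) ℝ) (P : Fin m → Fin k)
    (Q : Fin n → Fin l) : (quotMat A P Q)ᵀ = quotMat Aᵀ Q P := by
  ext q p
  simp only [transpose_apply, quotMat]
  rw [mul_comm ((partSet P p).card : ℝ), Finset.sum_comm]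

theorem mul_partCharMat {m n k l : ℕ} {A : Matrix (Fin m) (Fin n) ℝ} {P : Fin m → Fin k}
    {Q : Fin n → Fin l} (hrow : ∀ p q, ∀ i ∈ partSet P p, ∀ i' ∈ partSet P p,
      ∑ j ∈ partSet Q q, A i j = ∑ j ∈ partSet Q q, A i' j) :
    A * partCharMat Q = partCharMat P * quotMat A P Q := by
  ext i q
  rw [partCharMat_mul_apply, mul_apply, sum_mul_partCharMat, quotMat]
  have hc : (0 : ℝ) < (partSet P (P i)).card := by exact_mod_cast card_partSet_self_pos P i
  have hblock : ∑ i' ∈ partSet P (P i), ∑ j ∈ partSet Q q, A i' j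
      = (partSet P (P i)).card * ∑ j ∈ partSet Q q, A i j := by
    rw [Finset.sum_congr rfl fun i' hi' => hrow _ q i' hi' i (mem_partSet.2 rfl),
      Finset.sum_const, nsmul_eq_mul]
  rw [hblock, Real.sqrt_mul hc.le]
  field_simp
  rw [Real.sq_sqrt hc.le]

theorem stmt13_general {m n k l : ℕ} (hn : 0 < n) (hl : 0 < l)
    (A : Matrix (Fin m) (Fin n) ℝ) (hnonneg : ∀ i j, 0 ≤ A i j)
    (P : Fin m → Fin k)
    (Q : Fin n → Fin l) (hQ : Function.Surjective Q)
    (hequit : ∀ p q, BlockRegular A (partSet P p) (partSet Q q)) :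
    sigma1R A = sigma1R (quotMat A P Q) := by
  have : Nonempty (Fin n) := ⟨⟨0, hn⟩⟩
  have : Nonempty (Fin l) := ⟨⟨0, hl⟩⟩
  set B := quotMat A P Q
  set T := partCharMat Q
  have hAT : A * T = partCharMat P * B := mul_partCharMat fun p q => (hequit p q).1
  have hAtP : Aᵀ * partCharMat P = T * Bᵀ := by
    rw [quotMat_transpose]
    exact mul_partCharMat fun q p => (hequit p q).2
  have hMT : Aᴴ * A * T = T * (Bᴴ * B) := by
    simp only [conjTranspose_eq_transpose_of_trivial]
    rw [Matrix.mul_assoc, hAT, ← Matrix.mul_assoc, hAtP, Matrix.mul_assoc]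
  have hM₀ (i j : Fin n) : 0 ≤ (Aᴴ * A) i j := by
    simpa [mul_apply] using Finset.sum_nonneg fun t _ => mul_nonneg (hnonneg t i) (hnonneg t j)
  have hM := isHermitian_conjTranspose_mul_self A
  have hN := isHermitian_conjTranspose_mul_self B
  rw [sigma1R, sigma1R]
  congr 1
  exact le_antisymm
    (hM.iSup_eigenvalues_le_of_mul_eq_mul_of_nonneg hN hM₀ (partCharMat_nonneg Q)
      (fun j => ⟨Q j, partCharMat_apply_self_pos Q j⟩) hMT)
    (hM.iSup_eigenvalues_le_of_mul_eq_mul hN (partCharMat_transpose_mul_self Q hQ) hMT)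

/-- if `A` is nonnegative, `A Aᵀ` and `Aᵀ A` are irreducible, and the
partition `P×Q` is equitable for `A` (every block `A[P p, Q q]` is regular), then
`σ₁(A) = σ₁(A|P×Q)`. -/
theorem stmt13 {m n k l : ℕ} (hm : 0 < m) (hn : 0 < n) (hk : 0 < k) (hl : 0 < l)
    (A : Matrix (Fin m) (Fin n) ℝ) (hnonneg : ∀ i j, 0 ≤ A i j)
    (hirr1 : MatIrred (A * Aᵀ)) (hirr2 : MatIrred (Aᵀ * A))
    (P : Fin m → Fin k) (hP : Function.Surjective P)
    (Q : Fin n → Fin l) (hQ : Function.Surjective Q)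
    (hequit : ∀ p q, BlockRegular A (partSet P p) (partSet Q q)) :
    sigma1R A = sigma1R (quotMat A P Q) :=
  stmt13_general hn hl A hnonneg P Q hQ hequit
end
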